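/- arXiv:1712.01979 — 8 statements merged into one kernel-verified Lean document; each statement's English description precedes it below -/
import Mathlib

section
/- The Deuring polynomial of degree n satisfies H{n}(λ) = (1−λ)^n · P_n((1+λ)/(1−λ)), where P_n is the degree-n Legendre polynomial, as an identity of rational functions over ℚ (equivalently, of polynomials after clearing (1−λ)^n). -/
open Polynomial Finset

/-- The Deuring polynomial `H{n}(λ) = ∑_{i=0}^n (n choose i)^2 λ^i`. -/
noncomputable def deuring (R : Type*) [CommRing R] (n : ℕ) : Polynomial R :=
  ∑ i ∈ Finset.range (n + 1), Polynomial.C ((n.choose i : R) ^ 2) * Polynomial.X ^ i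

/-- The Legendre polynomial of degree `n`,
`P_n(x) = 2^{-n} ∑_{k=0}^n (n choose k)^2 (x-1)^{n-k} (x+1)^k`. -/
noncomputable def legendre (n : ℕ) : Polynomial ℚ :=
  Polynomial.C ((2 : ℚ) ^ n)⁻¹ *
    ∑ k ∈ Finset.range (n + 1),
      Polynomial.C ((n.choose k : ℚ) ^ 2) * (Polynomial.X - 1) ^ (n - k) * (Polynomial.X + 1) ^ k

/-! The Legendre sum is homogeneous of degree `n` in `(x - 1, x + 1)`, so `(1 - λ)^n P_n(x)` at
`x = (1 + λ)/(1 - λ)` becomes `2^{-n} ∑ (n choose k)^2 (2λ)^{n-k} 2^k = ∑ (n choose k)^2 λ^{n-k}`,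
which is `H_n(λ)` read backwards through `(n choose k) = (n choose n - k)`. -/

theorem eval_deuring_eq_sum_reflect {R : Type*} [CommRing R] (n : ℕ) (x : R) :
    (deuring R n).eval x = ∑ k ∈ range (n + 1), (n.choose k : R) ^ 2 * x ^ (n - k) := by
  simp only [deuring, eval_finsetSum, eval_mul, eval_C, eval_pow, eval_X]
  rw [← sum_range_reflect]
  refine sum_congr rfl fun k hk => ?_
  rw [Nat.add_sub_cancel, Nat.choose_symm (Nat.lt_succ_iff.mp (mem_range.mp hk))]

theorem pow_mul_eval_legendre_div (n : ℕ) (a b : ℚ) (hb : b ≠ 0) :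
    b ^ n * (legendre n).eval (a / b) =
      (2 ^ n)⁻¹ * ∑ k ∈ range (n + 1), (n.choose k : ℚ) ^ 2 * (a - b) ^ (n - k) * (a + b) ^ k := by
  simp only [legendre, eval_mul, eval_finsetSum, eval_pow, eval_C, eval_X, eval_sub, eval_add,
    eval_one]
  rw [mul_left_comm, mul_sum]
  refine congrArg _ (sum_congr rfl fun k hk => ?_)
  have hbn : b ^ n = b ^ (n - k) * b ^ k := by
    rw [← pow_add, Nat.sub_add_cancel (Nat.lt_succ_iff.mp (mem_range.mp hk))]
  have hsub : a / b - 1 = (a - b) / b := by field_simp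
  have hadd : a / b + 1 = (a + b) / b := by field_simp
  rw [hsub, hadd, div_pow, div_pow, hbn]
  field_simp

theorem deuring_eq_legendre (n : ℕ) (lam : ℚ) (hlam : lam ≠ 1) :
    (deuring ℚ n).eval lam =
      (1 - lam) ^ n * (legendre n).eval ((1 + lam) / (1 - lam)) := by
  rw [pow_mul_eval_legendre_div n _ _ (sub_ne_zero.mpr hlam.symm), eval_deuring_eq_sum_reflect,
    mul_sum]
  refine sum_congr rfl fun k hk => ?_
  have h2n : (2 : ℚ) ^ n = 2 ^ (n - k) * 2 ^ k := by
    rw [← pow_add, Nat.sub_add_cancel (Nat.lt_succ_iff.mp (mem_range.mp hk))]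
  have hsub : 1 + lam - (1 - lam) = 2 * lam := by ring
  have hadd : 1 + lam + (1 - lam) = 2 := by ring
  rw [hsub, hadd, mul_pow, h2n]
  field_simp
end

section
/- (Schur's congruence) Fix a prime p and write the base-p expansion n = b_0 + b_1 p + ⋯ + b_e p^e with 0 ≤ b_i < p. Then in 𝔽_p[λ], H{n} = H{b_0} · H{b_1}^{p} · H{b_2}^{p^2} ⋯ H{b_e}^{p^e}. -/
/-!
By Lucas's theorem, for `a, i < p` the binomial coefficient `(a + m p).choose (i + j p)` is
`a.choose i * m.choose j` modulo `p`, so term by term `H{a + m p}(λ) = H{a}(λ) · H{m}(λ^p)`, and over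
`𝔽_p` one has `H{m}(λ^p) = H{m}(λ)^p`. Peeling off the lowest digit and inducting gives the product.
-/

open Polynomial Finset

lemma Finset.sum_range_mul_eq_sum_sum {M : Type*} [AddCommMonoid M] (f : ℕ → M) (m p : ℕ) :
    ∑ k ∈ range (m * p), f k = ∑ j ∈ range m, ∑ i ∈ range p, f (i + j * p) := by
  induction m with
  | zero => simp
  | succ m ih =>
    rw [add_one_mul, sum_range_add, ih, sum_range_succ]
    simp only [add_comm (m * p)]

lemma ZMod.natCast_choose_add_mul (p : ℕ) [Fact p.Prime] {a i : ℕ} (ha : a < p) (hi : i < p)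
    (m j : ℕ) :
    ((a + m * p).choose (i + j * p) : ZMod p) = a.choose i * m.choose j := by
  have hp : 0 < p := (Fact.out : p.Prime).pos
  have lucas := (ZMod.natCast_eq_natCast_iff _ _ _).2
    (Choose.choose_modEq_choose_mod_mul_choose_div_nat (n := a + m * p) (k := i + j * p) (p := p))
  rwa [Nat.add_mul_mod_self_right, Nat.add_mul_mod_self_right, Nat.add_mul_div_right _ _ hp,
    Nat.add_mul_div_right _ _ hp, Nat.mod_eq_of_lt ha, Nat.mod_eq_of_lt hi, Nat.div_eq_of_lt ha,
    Nat.div_eq_of_lt hi, zero_add, zero_add, Nat.cast_mul] at lucas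

lemma deuring_eq_sum_range {R : Type*} [CommRing R] {n N : ℕ} (hN : n + 1 ≤ N) :
    deuring R n = ∑ i ∈ range N, C ((n.choose i : R) ^ 2) * X ^ i := by
  refine sum_subset (range_subset_range.2 hN) fun i _ hi ↦ ?_
  rw [Nat.choose_eq_zero_of_lt (by simpa using hi)]
  simp

lemma deuring_add_mul (p : ℕ) [Fact p.Prime] {a : ℕ} (ha : a < p) (m : ℕ) :
    deuring (ZMod p) (a + m * p) = deuring (ZMod p) a * deuring (ZMod p) m ^ p := by
  rw [← ZMod.expand_card, deuring_eq_sum_range (N := (m + 1) * p) (by nlinarith),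
    sum_range_mul_eq_sum_sum, deuring_eq_sum_range (N := p) (by omega), deuring, map_sum,
    mul_sum]
  refine sum_congr rfl fun j _ ↦ ?_
  rw [sum_mul]
  refine sum_congr rfl fun i hi ↦ ?_
  rw [ZMod.natCast_choose_add_mul p ha (mem_range.1 hi)]
  simp only [expand_C, expand_X, mul_pow, pow_add, pow_mul, map_pow, map_mul]
  ring

/-- Schur's congruence. -/
theorem deuring_schur (p : ℕ) (hp : p.Prime) (n e : ℕ) (b : ℕ → ℕ)
    (hb : ∀ i ≤ e, b i < p)
    (hn : n = ∑ i ∈ Finset.range (e + 1), b i * p ^ i) :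
    deuring (ZMod p) n = ∏ i ∈ Finset.range (e + 1), (deuring (ZMod p) (b i)) ^ (p ^ i) := by
  have : Fact p.Prime := ⟨hp⟩
  subst hn
  induction e generalizing b with
  | zero => simp
  | succ e ih =>
    have digits_shift : ∑ i ∈ range (e + 2), b i * p ^ i
        = b 0 + (∑ i ∈ range (e + 1), b (i + 1) * p ^ i) * p := by
      rw [sum_range_succ', sum_mul, add_comm]
      simp only [pow_succ, mul_assoc, pow_zero, mul_one]
    rw [digits_shift, deuring_add_mul p (hb 0 (by omega)),
      ih (fun i ↦ b (i + 1)) (fun i hi ↦ hb (i + 1) (by omega)), prod_range_succ' _ (e + 1),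
      ← prod_pow, mul_comm]
    simp only [pow_zero, pow_one, pow_succ, pow_mul]
end

section
/- Let K be a field of characteristic p and suppose F ∈ K[λ] has degree d < p and satisfies λ(λ−1)F″ + aλF′ + bF′ + cF = 0 for some constants a,b,c ∈ K. Then every root α of F in K with multiplicity at least 2 satisfies α = 0 or α = 1. -/
open Polynomial

/-
Let α ∉ {0, 1} be a root of multiplicity m ≥ 2. Every term of the equation other than
X(X - 1)F″ is divisible by (X - α)^(m-1), and X - α is prime to X(X - 1),
so (X - α)^(m-1) ∣ F″.
But m ≤ deg F < p, so m and m - 1 are nonzero in K, and then each differentiation lowers the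
multiplicity of α by exactly one: F″ vanishes at α to order exactly m - 2.
-/

namespace Polynomial

variable {R : Type*} [CommRing R]

theorem not_pow_rootMultiplicity_dvd_derivative {p : R[X]} {t : R} (hp : p ≠ 0)
    (hpt : p.IsRoot t) (hnzd : (p.rootMultiplicity t : R) ∈ nonZeroDivisors R) :
    ¬(X - C t) ^ p.rootMultiplicity t ∣ derivative p := by
  intro hdvd
  have hpos := (rootMultiplicity_pos hp).2 hpt
  have hder := derivative_rootMultiplicity_of_root_of_mem_nonZeroDivisors hpt hnzd
  by_cases hp' : derivative p = 0
  · have hgt : 1 < p.rootMultiplicity t :=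
      (one_lt_rootMultiplicity_iff_isRoot hp).2 ⟨hpt, by simp [hp']⟩
    rw [hp', rootMultiplicity_zero] at hder
    omega
  · have := (le_rootMultiplicity_iff hp').2 hdvd
    omega

theorem not_pow_rootMultiplicity_sub_one_dvd_derivative_derivative {p : R[X]} {t : R}
    (hp : p ≠ 0) (hm : 2 ≤ p.rootMultiplicity t)
    (hnzd : (p.rootMultiplicity t : R) ∈ nonZeroDivisors R)
    (hnzd' : ((p.rootMultiplicity t - 1 : ℕ) : R) ∈ nonZeroDivisors R) :
    ¬(X - C t) ^ (p.rootMultiplicity t - 1) ∣ derivative (derivative p) := by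
  obtain ⟨hpt, hp't⟩ := (one_lt_rootMultiplicity_iff_isRoot hp).1 hm
  have hder := derivative_rootMultiplicity_of_root_of_mem_nonZeroDivisors hpt hnzd
  have hp' : derivative p ≠ 0 := by
    intro h
    rw [h, rootMultiplicity_zero] at hder
    omega
  rw [← hder] at hnzd' ⊢
  exact not_pow_rootMultiplicity_dvd_derivative hp' hp't hnzd'

theorem rootMultiplicity_le_natDegree [IsDomain R] (p : R[X]) (t : R) :
    p.rootMultiplicity t ≤ p.natDegree := by
  rcases eq_or_ne p 0 with rfl | hp
  · simp
  · simpa using natDegree_le_of_dvd (pow_rootMultiplicity_dvd p t) hp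

end Polynomial

theorem CharP.natCast_ne_zero_of_pos_of_lt {R : Type*} [AddMonoidWithOne R] (p : ℕ) [CharP R p]
    {k : ℕ} (hk : 0 < k) (hkp : k < p) : (k : R) ≠ 0 := by
  rw [Ne, CharP.cast_eq_zero_iff R p]
  exact fun h => (Nat.le_of_dvd hk h).not_gt hkp

theorem repeatedRoots_of_diffEq_general (p : ℕ) (K : Type*) [Field K] [CharP K p]
    (F : Polynomial K) (hdeg : F.natDegree < p) (a b c : K)
    (hde : Polynomial.X * (Polynomial.X - 1) * Polynomial.derivative (Polynomial.derivative F) +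
        Polynomial.C a * Polynomial.X * Polynomial.derivative F +
        Polynomial.C b * Polynomial.derivative F + Polynomial.C c * F = 0)
    (α : K) (hα : 2 ≤ F.rootMultiplicity α) : α = 0 ∨ α = 1 := by
  by_contra! hα01
  set m := F.rootMultiplicity α
  have hF : F ≠ 0 := fun h => by simp [m, h] at hα
  have hmp : m < p := (rootMultiplicity_le_natDegree F α).trans_lt hdeg
  have hdvdF : (X - C α) ^ (m - 1) ∣ F :=
    (pow_dvd_pow _ (m.sub_le 1)).trans (pow_rootMultiplicity_dvd F α)
  have hdvdF' : (X - C α) ^ (m - 1) ∣ derivative F :=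
    pow_sub_one_dvd_derivative_of_pow_dvd (pow_rootMultiplicity_dvd F α)
  have hdvd : (X - C α) ^ (m - 1) ∣ X * (X - 1) * derivative (derivative F) := by
    rw [show X * (X - 1) * derivative (derivative F) =
      -((C a * X + C b) * derivative F + C c * F) by linear_combination hde]
    exact (dvd_add (dvd_mul_of_dvd_right hdvdF' _) (dvd_mul_of_dvd_right hdvdF _)).neg_right
  have hcoprime : ¬X - C α ∣ X * (X - 1) := by
    rw [dvd_iff_isRoot]
    simp [sub_eq_zero, hα01.1, hα01.2]
  have hm : (m : K) ≠ 0 := CharP.natCast_ne_zero_of_pos_of_lt p (by omega) hmp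
  have hm' : ((m - 1 : ℕ) : K) ≠ 0 := CharP.natCast_ne_zero_of_pos_of_lt p (by omega) (by omega)
  exact not_pow_rootMultiplicity_sub_one_dvd_derivative_derivative hF hα
    (mem_nonZeroDivisors_of_ne_zero hm) (mem_nonZeroDivisors_of_ne_zero hm')
    ((prime_X_sub_C α).pow_dvd_of_dvd_mul_left _ hcoprime hdvd)

theorem repeatedRoots_of_diffEq (p : ℕ) (hp : p.Prime) (K : Type*) [Field K] [CharP K p]
    (F : Polynomial K) (hdeg : F.natDegree < p) (a b c : K)
    (hde : Polynomial.X * (Polynomial.X - 1) * Polynomial.derivative (Polynomial.derivative F) +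
        Polynomial.C a * Polynomial.X * Polynomial.derivative F +
        Polynomial.C b * Polynomial.derivative F + Polynomial.C c * F = 0)
    (α : K) (hα : 2 ≤ F.rootMultiplicity α) : α = 0 ∨ α = 1 :=
  repeatedRoots_of_diffEq_general p K F hdeg a b c hde α hα
end

section
/- For every integer n ≥ 0, the Deuring polynomial H = H{n} ∈ ℤ[λ] satisfies the differential equation λ(λ−1)H″ + (λ(1−2n) − 1)H′ + n² H = 0. -/
/-!
Write `θ = X · d/dX`, which acts on `X ^ k` as multiplication by `k`. The operator of the
equation is `(θ - n)² - d/dX ∘ θ`, so comparing coefficients of `X ^ k` turns the equation into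
`(n - k)² a_k = (k + 1)² a_{k+1}` for the coefficients `a_k = (n choose k)²` of `H`, which is the
square of `(n - k) (n choose k) = (k + 1) (n choose (k + 1))`.
-/

open Polynomial Finset

lemma Nat.cast_sub_mul_choose {R : Type*} [CommRing R] (n k : ℕ) :
    ((n : R) - k) * n.choose k = (k + 1) * n.choose (k + 1) := by
  rcases le_or_gt k n with hkn | hnk
  · have := congrArg (Nat.cast : ℕ → R) (Nat.choose_succ_right_eq n k)
    push_cast [Nat.cast_sub hkn] at this
    linear_combination -this
  · simp [Nat.choose_eq_zero_of_lt hnk, Nat.choose_eq_zero_of_lt (Nat.lt_succ_of_lt hnk)]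

namespace Polynomial

variable {R : Type*} [CommRing R]

lemma coeff_X_mul_derivative (p : R[X]) (k : ℕ) :
    (X * derivative p).coeff k = k * p.coeff k := by
  cases k with
  | zero => simp
  | succ k => rw [coeff_X_mul, coeff_derivative]; push_cast; ring

lemma coeff_deuring_operator (p : R[X]) (c : R) (k : ℕ) :
    (X * (X - 1) * derivative (derivative p) + (X * C (1 - 2 * c) - 1) * derivative p +
        C (c ^ 2) * p).coeff k =
      (c - k) ^ 2 * p.coeff k - (k + 1) ^ 2 * p.coeff (k + 1) := by
  have hθ : X * (X - 1) * derivative (derivative p) + (X * C (1 - 2 * c) - 1) * derivative p +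
        C (c ^ 2) * p =
      X * derivative (X * derivative p) - C (2 * c) * (X * derivative p) + C (c ^ 2) * p -
        derivative (X * derivative p) := by
    simp only [derivative_mul, derivative_X, one_mul, map_sub, map_mul, map_one, C_ofNat]
    ring
  rw [hθ]
  simp only [coeff_sub, coeff_add, coeff_C_mul, coeff_derivative, coeff_X_mul_derivative]
  push_cast
  ring

end Polynomial

lemma coeff_deuring (R : Type*) [CommRing R] (n k : ℕ) :
    (deuring R n).coeff k = (n.choose k : R) ^ 2 := by
  simp only [deuring, finsetSum_coeff, coeff_C_mul, coeff_X_pow, mul_ite, mul_one, mul_zero,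
    Finset.sum_ite_eq, Finset.mem_range]
  split_ifs with hk
  · rfl
  · simp [Nat.choose_eq_zero_of_lt (by omega : n < k)]

theorem deuring_diffEq (n : ℕ) :
    Polynomial.X * (Polynomial.X - 1) *
        Polynomial.derivative (Polynomial.derivative (deuring ℤ n)) +
      (Polynomial.X * Polynomial.C (1 - 2 * (n : ℤ)) - 1) *
        Polynomial.derivative (deuring ℤ n) +
      Polynomial.C ((n : ℤ) ^ 2) * deuring ℤ n = 0 := by
  ext k
  rw [coeff_deuring_operator, coeff_deuring, coeff_deuring, coeff_zero]
  have h := Nat.cast_sub_mul_choose (R := ℤ) n k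
  linear_combination ((n - k) * (n.choose k : ℤ) + (k + 1) * n.choose (k + 1)) * h
end

section
/- For every integer n ≥ 0, the polynomial F = F{n} ∈ ℚ[λ] satisfies λ(λ−1)F″ − (1+2n)λF′ + (n+1)² F = 0. -/
/-!
Let `L_a = X(X-1)D² - (2a-1)XD + a²`, so the claim is `L_{n+1} F = 0`. On monomials
`L_a X^(k+1) = (a-k-1)² X^(k+1) - (k+1)k X^k`, and the identity `C(n,i)(n-i) = C(n,i+1)(i+1)`
turns the image of the `i`-th term of `F` into `g(i+1) - g(i)` with `g(k) = C(n,k)² k X^k`.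
The sum over `i ≤ n` telescopes to `g(n+1) - g(0) = 0`.
-/

open Polynomial Finset

noncomputable def deuringAnti (n : ℕ) : Polynomial ℚ :=
  ∑ i ∈ Finset.range (n + 1),
    Polynomial.C ((n.choose i : ℚ) ^ 2 / (i + 1)) * Polynomial.X ^ (i + 1)

theorem Nat.cast_choose_mul_sub {R : Type*} [CommRing R] (n k : ℕ) :
    (n.choose k : R) * (n - k) = n.choose (k + 1) * (k + 1) := by
  rcases le_or_gt k n with hk | hk
  · exact_mod_cast (congrArg ((↑) : ℕ → R) (Nat.choose_succ_right_eq n k)).symm.trans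
      (by push_cast [hk]; rfl)
  · simp [Nat.choose_eq_zero_of_lt hk, Nat.choose_eq_zero_of_lt (Nat.lt_succ_of_lt hk)]

namespace Polynomial

variable {R : Type*} [CommRing R]

/-- The Gauss hypergeometric operator with parameters `(-a, -a; 0)`, up to sign. -/
noncomputable def hypergeomOp (a : R) : R[X] →ₗ[R] R[X] :=
  LinearMap.mulLeft R (X * (X - 1)) ∘ₗ derivative ∘ₗ derivative -
    LinearMap.mulLeft R (C (2 * a - 1) * X) ∘ₗ derivative + a ^ 2 • LinearMap.id

theorem hypergeomOp_apply (a : R) (p : R[X]) :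
    hypergeomOp a p = X * (X - 1) * derivative (derivative p) -
      C (2 * a - 1) * X * derivative p + C (a ^ 2) * p := by
  simp [hypergeomOp, smul_eq_C_mul, mul_assoc]

theorem hypergeomOp_X_pow_succ (a : R) (k : ℕ) :
    hypergeomOp a (X ^ (k + 1)) =
      C ((a - (k + 1)) ^ 2) * X ^ (k + 1) - C (((k : R) + 1) * k) * X ^ k := by
  rw [hypergeomOp_apply]
  rcases k with _ | k <;> simp [map_ofNat C 2] <;> ring

end Polynomial

theorem hypergeomOp_deuringAnti_term (n i : ℕ) :
    hypergeomOp ((n : ℚ) + 1) (C ((n.choose i : ℚ) ^ 2 / (i + 1)) * X ^ (i + 1)) =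
      C ((n.choose (i + 1) : ℚ) ^ 2 * ↑(i + 1)) * X ^ (i + 1) -
        C ((n.choose i : ℚ) ^ 2 * i) * X ^ i := by
  have hi : (i : ℚ) + 1 ≠ 0 := by positivity
  have hchoose := Nat.cast_choose_mul_sub (R := ℚ) n i
  rw [← smul_eq_C_mul, map_smul, hypergeomOp_X_pow_succ, smul_sub, smul_eq_C_mul, smul_eq_C_mul,
    ← mul_assoc, ← mul_assoc, ← C_mul, ← C_mul]
  congr 3
  · push_cast
    rw [add_sub_add_right_eq_sub, div_mul_eq_mul_div, ← mul_pow, hchoose]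
    field_simp
  · field_simp

theorem deuringAnti_diffEq (n : ℕ) :
    Polynomial.X * (Polynomial.X - 1) *
        Polynomial.derivative (Polynomial.derivative (deuringAnti n)) -
      Polynomial.C (1 + 2 * (n : ℚ)) * Polynomial.X *
        Polynomial.derivative (deuringAnti n) +
      Polynomial.C (((n : ℚ) + 1) ^ 2) * deuringAnti n = 0 := by
  have hcoeff : 1 + 2 * (n : ℚ) = 2 * (n + 1) - 1 := by ring
  rw [hcoeff, ← hypergeomOp_apply, deuringAnti, map_sum]
  simp_rw [hypergeomOp_deuringAnti_term]
  rw [sum_range_sub (fun k => C ((n.choose k : ℚ) ^ 2 * k) * X ^ k)]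
  simp
end

section
/- Fix a prime p and an integer n with 0 ≤ n < p/2, and let K be a field of characteristic p. Then the polynomial F{n}, viewed in K[λ], has no repeated roots over the algebraic closure of K. -/
/-!
`F = F{n}` is the antiderivative of Deuring's polynomial `H = ∑ (n choose i)^2 λ^i`, and
`λ(1-λ)F'' + (2n+1)λF' = (n+1)^2 F`. At a multiple root `α`, write `F = (λ-α)^m u` with `u(α) ≠ 0` and
`2 ≤ m ≤ n + 1 < p`; dividing the equation by `(λ-α)^(m-2)` and evaluating at `α` leaves
`α(1-α)m(m-1)u(α) = 0`, so `α ∈ {0, 1}`. But `α` is also a root of `F' = H`, while `H(0) = 1` and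
`H(1) = (2n choose n)` is prime to `p` because `2n < p`.
-/

open Polynomial Finset

/-- `F{n}` viewed in `K[λ]`: `∑_{i=0}^n ((n choose i)^2/(i+1)) λ^{i+1}`, where the
coefficients are computed in `K` (this makes sense whenever `i + 1` is invertible in `K`). -/
noncomputable def deuringAntiK (K : Type*) [Field K] (n : ℕ) : Polynomial K :=
  ∑ i ∈ Finset.range (n + 1),
    Polynomial.C ((n.choose i : K) ^ 2 / ((i : K) + 1)) * Polynomial.X ^ (i + 1)

namespace CharP

variable {R : Type*} [AddMonoidWithOne R] {p : ℕ} [CharP R p]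

theorem natCast_ne_zero_of_lt {m : ℕ} (h0 : m ≠ 0) (hp : m < p) : (m : R) ≠ 0 := by
  rw [Ne, CharP.cast_eq_zero_iff R p]
  exact fun hdvd => (Nat.le_of_dvd (Nat.pos_of_ne_zero h0) hdvd).not_gt hp

theorem natCast_add_one_ne_zero_of_lt {j : ℕ} (hj : j + 1 < p) : (j : R) + 1 ≠ 0 := by
  exact_mod_cast natCast_ne_zero_of_lt (R := R) j.succ_ne_zero hj

theorem natCast_choose_ne_zero (hp : p.Prime) {m : ℕ} (hm : m < p) {k : ℕ} (hk : k ≤ m) :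
    (m.choose k : R) ≠ 0 := by
  rw [Ne, CharP.cast_eq_zero_iff R p]
  intro hdvd
  have hchoose : m.choose k ∣ m.factorial :=
    Nat.choose_mul_factorial_mul_factorial hk ▸ (dvd_mul_right _ _).mul_right _
  have := hp.dvd_factorial.mp (hdvd.trans hchoose)
  omega

end CharP

namespace Polynomial

theorem coeff_X_mul_derivative_s11 {R : Type*} [Semiring R] (f : R[X]) (m : ℕ) :
    (X * derivative f).coeff m = f.coeff m * m := by
  rcases m with _ | m
  · simp
  · rw [coeff_X_mul, coeff_derivative, Nat.cast_succ]

variable {R : Type*} [CommRing R]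

theorem derivative_X_sub_C_pow_succ_mul (α : R) (j : ℕ) (g : R[X]) :
    derivative ((X - C α) ^ (j + 1) * g) =
      (X - C α) ^ j * (C ((j + 1 : ℕ) : R) * g + (X - C α) * derivative g) := by
  rw [derivative_mul, derivative_X_sub_C_pow, Nat.add_sub_cancel, pow_succ]
  ring

theorem isRoot_of_ode_of_one_lt_rootMultiplicity [IsDomain R] {a b c f : R[X]} {α : R}
    (hode : a * derivative (derivative f) + b * derivative f = c * f) (hf : f ≠ 0)
    (hm : 1 < f.rootMultiplicity α)
    (hchar : ((f.rootMultiplicity α * (f.rootMultiplicity α - 1) : ℕ) : R) ≠ 0) :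
    a.IsRoot α := by
  obtain ⟨k, hk⟩ : ∃ k, f.rootMultiplicity α = k + 2 := ⟨_, (Nat.sub_add_cancel hm).symm⟩
  rw [hk] at hchar
  obtain ⟨hk2, hk1⟩ : ((k : R) + 2) ≠ 0 ∧ ((k : R) + 1) ≠ 0 := by simpa using hchar
  set q := X - C α
  set u := f /ₘ q ^ f.rootMultiplicity α
  have hu : eval α u ≠ 0 := eval_divByMonic_pow_rootMultiplicity_ne_zero α hf
  have hfu : f = q ^ (k + 2) * u := by
    rw [← hk]
    exact (pow_mul_divByMonic_rootMultiplicity_eq f α).symm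
  set g := C ((k + 2 : ℕ) : R) * u + q * derivative u
  have hf' : derivative f = q ^ (k + 1) * g := by
    rw [hfu, derivative_X_sub_C_pow_succ_mul]
  have hf'' : derivative (derivative f) =
      q ^ k * (C ((k + 1 : ℕ) : R) * g + q * derivative g) := by
    rw [hf', derivative_X_sub_C_pow_succ_mul]
  have hcancel : a * (C ((k + 1 : ℕ) : R) * g + q * derivative g)
      + q * (b * g - q * c * u) = 0 := by
    refine (mul_eq_zero.mp ?_).resolve_left (pow_ne_zero k (X_sub_C_ne_zero α))
    rw [hf'', hf', hfu] at hode
    linear_combination hode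
  simpa [q, g, hk1, hk2, hu] using congrArg (eval α) hcancel

end Polynomial

noncomputable def deuringK (R : Type*) [Semiring R] (n : ℕ) : R[X] :=
  ∑ i ∈ range (n + 1), C ((n.choose i : R) ^ 2) * X ^ i

theorem coeff_deuringK {R : Type*} [Semiring R] (n j : ℕ) :
    (deuringK R n).coeff j = (n.choose j : R) ^ 2 := by
  simp only [deuringK, finsetSum_coeff, coeff_C_mul_X_pow, sum_ite_eq, mem_range]
  split_ifs with h
  · rfl
  · rw [Nat.choose_eq_zero_of_lt (by omega), Nat.cast_zero, zero_pow two_ne_zero]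

section Deuring

variable {K : Type*} [Field K] {p n : ℕ}

theorem eval_zero_deuringK (n : ℕ) : (deuringK K n).eval 0 = 1 := by
  rw [← coeff_zero_eq_eval_zero, coeff_deuringK, Nat.choose_zero_right, Nat.cast_one, one_pow]

theorem eval_one_deuringK (n : ℕ) : (deuringK K n).eval 1 = ((2 * n).choose n : K) := by
  simp [deuringK, eval_finsetSum, ← Nat.sum_range_choose_sq]

theorem coeff_deuringAntiK_zero (n : ℕ) : (deuringAntiK K n).coeff 0 = 0 := by
  simp [deuringAntiK, finsetSum_coeff]

theorem coeff_deuringAntiK_succ (n j : ℕ) :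
    (deuringAntiK K n).coeff (j + 1) = (n.choose j : K) ^ 2 / ((j : K) + 1) := by
  simp only [deuringAntiK, finsetSum_coeff, coeff_C_mul_X_pow, add_left_inj, sum_ite_eq,
    mem_range]
  split_ifs with h
  · rfl
  · rw [Nat.choose_eq_zero_of_lt (by omega), Nat.cast_zero, zero_pow two_ne_zero, zero_div]

variable (K) in
theorem deuringAntiK_ne_zero (n : ℕ) : deuringAntiK K n ≠ 0 := by
  intro h
  simpa [h] using coeff_deuringAntiK_succ (K := K) n 0

theorem map_deuringAntiK {L : Type*} [Field L] (φ : K →+* L) (n : ℕ) :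
    (deuringAntiK K n).map φ = deuringAntiK L n := by
  simp [deuringAntiK, Polynomial.map_sum]

theorem natDegree_deuringAntiK_le (n : ℕ) : (deuringAntiK K n).natDegree ≤ n + 1 := by
  refine natDegree_sum_le_of_forall_le _ _ fun i hi => (natDegree_C_mul_X_pow_le _ _).trans ?_
  have := mem_range.mp hi
  omega

variable [CharP K p]

theorem derivative_deuringAntiK (hn : n + 1 < p) :
    derivative (deuringAntiK K n) = deuringK K n := by
  ext j
  rw [coeff_derivative, coeff_deuringAntiK_succ, coeff_deuringK]
  rcases le_or_gt j n with hj | hj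
  · rw [div_mul_cancel₀ _ (CharP.natCast_add_one_ne_zero_of_lt (by omega))]
  · simp [Nat.choose_eq_zero_of_lt hj]

/-- Differentiating this identity gives the hypergeometric equation of
`deuringK K n = ₂F₁(-n, -n; 1; λ)`. -/
theorem deuringAntiK_ode (hn : n + 1 < p) :
    X * (1 - X) * derivative (deuringK K n) + C ((2 * n + 1 : ℕ) : K) * X * deuringK K n =
      C (((n + 1 : ℕ) : K) ^ 2) * deuringAntiK K n := by
  rw [mul_one_sub, sub_mul, mul_assoc, mul_assoc]
  ext (_ | j)
  · simp [coeff_deuringAntiK_zero]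
  rw [coeff_add, coeff_sub, coeff_X_mul_derivative_s11, coeff_X_mul, coeff_X_mul_derivative_s11,
    coeff_C_mul, coeff_X_mul, coeff_C_mul, coeff_deuringAntiK_succ, coeff_deuringK,
    coeff_deuringK]
  rcases le_or_gt j n with hj | hj
  · have hchoose : (n.choose (j + 1) : K) * ((j : K) + 1) = (n.choose j : K) * ((n : K) - j) := by
      have := congrArg (Nat.cast (R := K)) (Nat.choose_succ_right_eq n j)
      push_cast [Nat.cast_sub hj] at this
      exact this
    have hj1 : (j : K) + 1 ≠ 0 := CharP.natCast_add_one_ne_zero_of_lt (by omega)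
    field_simp [hj1]
    push_cast
    linear_combination
      ((n.choose (j + 1) : K) * ((j : K) + 1) + (n.choose j : K) * ((n : K) - j)) * hchoose
  · simp [Nat.choose_eq_zero_of_lt hj, Nat.choose_eq_zero_of_lt (hj.trans j.lt_succ_self)]

theorem rootMultiplicity_deuringAntiK_le_one (hp : p.Prime) (hn : 2 * n < p) (α : K) :
    (deuringAntiK K n).rootMultiplicity α ≤ 1 := by
  have hn' : n + 1 < p := by
    rcases n with _ | n
    · exact hp.one_lt
    · omega
  set f := deuringAntiK K n
  have hf' : derivative f = deuringK K n := derivative_deuringAntiK hn'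
  have hf : f ≠ 0 := deuringAntiK_ne_zero K n
  by_contra! hm
  have hmn : f.rootMultiplicity α ≤ n + 1 := by
    have := natDegree_le_of_dvd (pow_rootMultiplicity_dvd f α) hf
    rw [natDegree_pow, natDegree_X_sub_C, mul_one] at this
    exact this.trans (natDegree_deuringAntiK_le n)
  have hchar : ((f.rootMultiplicity α * (f.rootMultiplicity α - 1) : ℕ) : K) ≠ 0 := by
    rw [Nat.cast_mul]
    exact mul_ne_zero (CharP.natCast_ne_zero_of_lt (by omega) (by omega))
      (CharP.natCast_ne_zero_of_lt (by omega) (by omega))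
  have hα := isRoot_of_ode_of_one_lt_rootMultiplicity
    (by rw [hf']; exact deuringAntiK_ode hn') hf hm hchar
  rw [IsRoot, eval_mul, eval_sub, eval_X, eval_one, mul_eq_zero] at hα
  have hH : (deuringK K n).IsRoot α := hf' ▸ ((one_lt_rootMultiplicity_iff_isRoot hf).mp hm).2
  rcases hα with rfl | hα
  · rw [IsRoot, eval_zero_deuringK] at hH
    exact one_ne_zero hH
  · rw [← eq_of_sub_eq_zero hα, IsRoot, eval_one_deuringK] at hH
    exact CharP.natCast_choose_ne_zero hp hn (by omega) hH

end Deuring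

theorem deuringAnti_squarefree (p : ℕ) (hp : p.Prime) (n : ℕ) (hn : 2 * n < p)
    (K : Type*) [Field K] [CharP K p] :
    Squarefree ((deuringAntiK K n).map (algebraMap K (AlgebraicClosure K))) := by
  classical
  rw [map_deuringAntiK]
  set f := deuringAntiK (AlgebraicClosure K) n
  have hnodup : f.roots.Nodup := Multiset.nodup_iff_count_le_one.mpr fun α =>
    (count_roots f).trans_le (rootMultiplicity_deuringAntiK_le_one hp hn α)
  exact ((nodup_roots_iff_of_splits (deuringAntiK_ne_zero _ n) (IsAlgClosed.splits f)).mp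
    hnodup).squarefree
end

section
/- Let p be an odd prime, K an algebraically closed field of characteristic p, a ∈ K with a ≠ 0 and a ≠ 1, and f = xy(x+y)(x+ay) ∈ K[x,y]. If H{(p−1)/2}(a) ≠ 0, then the F-pure threshold of f at the origin equals 1/2. -/
section
open MvPolynomial Polynomial Finset

/-- The F-pure threshold at the origin of a bivariate polynomial over a field of
characteristic `p`: `sup { N/p^e : f^N ∉ (x^{p^e}, y^{p^e}) }`. -/
noncomputable def fpt (p : ℕ) {K : Type*} [Field K] (f : MvPolynomial (Fin 2) K) : ℝ :=
  sSup {r : ℝ | ∃ N e : ℕ, 0 < N ∧ 0 < e ∧ r = (N : ℝ) / (p : ℝ) ^ e ∧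
    f ^ N ∉ Ideal.span {(MvPolynomial.X 0 : MvPolynomial (Fin 2) K) ^ p ^ e,
      (MvPolynomial.X 1 : MvPolynomial (Fin 2) K) ^ p ^ e}}

end

/-!
Write `f = xy(x+y)(x+ay)`. Since `f` is homogeneous of degree 4, every monomial of `f^N` has
total degree `4N`, so `f^N ∉ (x^q, y^q)` forces `4N ≤ 2(q-1)`: the set defining the threshold
lies below `1/2`. Conversely, for `q = p^e` let `c_e` be the coefficient of `(xy)^(q-1)` in
`f^((q-1)/2)`. From `f^((pq-1)/2) = f^((p-1)/2) · (f^((q-1)/2))^p`, where the `p`-th power (a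
Frobenius twist of an expansion) only has exponents divisible by `p` and `f^((p-1)/2)` only has
exponents `≤ 2(p-1)`, one gets `c_(e+1) = c_1 · c_e^p`, while expanding `(x+y)^n (x+ay)^n` gives
`c_1 = H_((p-1)/2)(a)`. So all `c_e` are nonzero, `(p^e - 1)/(2p^e)` lies in the set for every
`e`, and these numbers tend to `1/2`.
-/

open Finset

namespace MvPolynomial

variable {K : Type*} [Field K]

noncomputable def expPair (s t : ℕ) : Fin 2 →₀ ℕ := Finsupp.single 0 s + Finsupp.single 1 t

@[simp] lemma expPair_apply_zero (s t : ℕ) : expPair s t 0 = s := by simp [expPair]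

@[simp] lemma expPair_apply_one (s t : ℕ) : expPair s t 1 = t := by simp [expPair]

lemma expPair_eq_iff {s t s' t' : ℕ} : expPair s t = expPair s' t' ↔ s = s' ∧ t = t' := by
  refine ⟨fun h => ⟨by simpa using congr($h 0), by simpa using congr($h 1)⟩, ?_⟩
  rintro ⟨rfl, rfl⟩
  rfl

lemma eq_expPair (d : Fin 2 →₀ ℕ) : d = expPair (d 0) (d 1) := by
  ext i; fin_cases i <;> simp

lemma expPair_add (s t s' t' : ℕ) : expPair s t + expPair s' t' = expPair (s + s') (t + t') := by
  ext i; fin_cases i <;> simp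

lemma smul_expPair (c s t : ℕ) : c • expPair s t = expPair (c * s) (c * t) := by
  ext i; fin_cases i <;> simp

lemma monomial_expPair (s t : ℕ) (c : K) :
    monomial (expPair s t) c = C c * X 0 ^ s * X 1 ^ t := by
  simp [expPair, X_pow_eq_monomial, monomial_mul, C_mul_monomial]

lemma mem_span_X_pow_iff {q : ℕ} {g : MvPolynomial (Fin 2) K} :
    g ∈ Ideal.span {X 0 ^ q, X 1 ^ q} ↔ ∀ d ∈ g.support, q ≤ d 0 ∨ q ≤ d 1 := by
  have : ({X 0 ^ q, X 1 ^ q} : Set (MvPolynomial (Fin 2) K)) =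
      (monomial · 1) '' {Finsupp.single 0 q, Finsupp.single 1 q} := by
    simp [Set.image_insert_eq, X_pow_eq_monomial]
  simp [this, mem_ideal_span_monomial_image, Finsupp.single_le_iff]

lemma IsHomogeneous.apply_zero_add_apply_one {g : MvPolynomial (Fin 2) K} {n : ℕ}
    (hg : g.IsHomogeneous n) {d : Fin 2 →₀ ℕ} (hd : d ∈ g.support) : d 0 + d 1 = n := by
  simpa [Finsupp.weight_apply, Finsupp.sum_fintype, Fin.sum_univ_two] using
    hg (mem_support_iff.mp hd)

lemma IsHomogeneous.add_two_le_of_notMem_span {g : MvPolynomial (Fin 2) K} {n q : ℕ}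
    (hg : g.IsHomogeneous n) (hgq : g ∉ Ideal.span {X 0 ^ q, X 1 ^ q}) : n + 2 ≤ 2 * q := by
  simp only [mem_span_X_pow_iff, not_forall, not_or, not_le] at hgq
  obtain ⟨d, hd, h0, h1⟩ := hgq
  have := hg.apply_zero_add_apply_one hd
  omega

lemma notMem_span_X_pow_of_coeff_ne_zero {g : MvPolynomial (Fin 2) K} {q : ℕ} (hq : 0 < q)
    (hg : coeff (expPair (q - 1) (q - 1)) g ≠ 0) : g ∉ Ideal.span {X 0 ^ q, X 1 ^ q} := by
  intro h
  have := mem_span_X_pow_iff.mp h _ (mem_support_iff.mpr hg)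
  simp only [expPair_apply_zero, expPair_apply_one] at this
  omega

lemma X_add_X_pow (n : ℕ) :
    (X 0 + X 1 : MvPolynomial (Fin 2) K) ^ n =
      ∑ i ∈ range (n + 1), monomial (expPair i (n - i)) (n.choose i : K) := by
  rw [add_pow]
  refine sum_congr rfl fun i _ => ?_
  rw [monomial_expPair, ← map_natCast C]
  ring

lemma X_add_C_mul_X_pow (c : K) (n : ℕ) :
    (X 0 + C c * X 1 : MvPolynomial (Fin 2) K) ^ n =
      ∑ j ∈ range (n + 1), monomial (expPair (n - j) j) (n.choose j * c ^ j) := by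
  rw [add_comm, add_pow]
  refine sum_congr rfl fun j _ => ?_
  rw [monomial_expPair, map_mul, map_pow, map_natCast]
  ring

lemma coeff_X_add_X_pow_mul_X_add_C_mul_X_pow (c : K) (n : ℕ) :
    coeff (expPair n n) ((X 0 + X 1) ^ n * (X 0 + C c * X 1) ^ n) =
      ∑ i ∈ range (n + 1), (n.choose i : K) ^ 2 * c ^ i := by
  simp only [X_add_X_pow, X_add_C_mul_X_pow, sum_mul_sum, monomial_mul, expPair_add, coeff_sum,
    coeff_monomial]
  refine sum_congr rfl fun i hi => ?_
  have hexp : ∀ j ∈ range (n + 1),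
      expPair (i + (n - j)) (n - i + j) = expPair n n ↔ j = i := by
    intro j hj
    simp only [mem_range] at hi hj
    rw [expPair_eq_iff]
    omega
  rw [sum_congr rfl fun j hj => if_congr (hexp j hj) rfl rfl, sum_ite_eq' _ _, if_pos hi]
  ring

lemma eq_of_coeff_ne_zero_of_coeff_expand_ne_zero {p q : ℕ} (hp : p ≠ 0) (hq : 0 < q)
    {g h : MvPolynomial (Fin 2) K} (hg : g.IsHomogeneous (2 * (p - 1))) {u v : Fin 2 →₀ ℕ}
    (huv : u + v = expPair (p * q - 1) (p * q - 1)) (hu : coeff u g ≠ 0)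
    (hv : coeff v (expand p h) ≠ 0) :
    u = expPair (p - 1) (p - 1) ∧ v = p • expPair (q - 1) (q - 1) := by
  have hdeg := hg.apply_zero_add_apply_one (mem_support_iff.mpr hu)
  -- `u i ≡ -1 (mod p)` and `u i ≤ 2(p-1)` leave only `u i = p - 1`.
  have hcoord : ∀ i, u i + v i + 1 = p * q → u i + 2 ≤ 2 * p →
      u i = p - 1 ∧ v i = p * (q - 1) := by
    intro i hsum hle
    have hdvd : p ∣ v i := not_not.mp fun h => hv (coeff_expand_of_not_dvd _ h)
    have hu1 : u i + 1 = p := Nat.eq_of_dvd_of_lt_two_mul (by omega)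
      ((Nat.dvd_add_right hdvd).mp ⟨q, by omega⟩) (by omega)
    refine ⟨by omega, ?_⟩
    rw [Nat.mul_sub_one]
    omega
  have hpq : 0 < p * q := Nat.mul_pos (Nat.pos_of_ne_zero hp) hq
  have huv0 := congr($huv 0)
  have huv1 := congr($huv 1)
  simp only [Finsupp.add_apply, expPair_apply_zero, expPair_apply_one] at huv0 huv1
  have h0 := hcoord 0 (by omega) (by omega)
  have h1 := hcoord 1 (by omega) (by omega)
  constructor
  · rw [eq_expPair u, h0.1, h1.1]
  · rw [smul_expPair, eq_expPair v, h0.2, h1.2]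

lemma coeff_mul_pow_expChar_expPair (p : ℕ) [ExpChar K p] {q : ℕ} (hq : 0 < q)
    {g : MvPolynomial (Fin 2) K} (hg : g.IsHomogeneous (2 * (p - 1)))
    (h : MvPolynomial (Fin 2) K) :
    coeff (expPair (p * q - 1) (p * q - 1)) (g * h ^ p) =
      coeff (expPair (p - 1) (p - 1)) g * coeff (expPair (q - 1) (q - 1)) h ^ p := by
  have hp := expChar_ne_zero K p
  have hdiag : expPair (p - 1) (p - 1) + p • expPair (q - 1) (q - 1) =
      expPair (p * q - 1) (p * q - 1) := by
    have : p ≤ p * q := Nat.le_mul_of_pos_right p hq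
    have : p * (q - 1) = p * q - p := Nat.mul_sub_one p q
    rw [smul_expPair, expPair_add, expPair_eq_iff]
    omega
  rw [← map_frobenius_expand p (f := h), coeff_mul,
    sum_eq_single_of_mem (expPair (p - 1) (p - 1), p • expPair (q - 1) (q - 1))
      (mem_antidiagonal.mpr hdiag), coeff_map, coeff_expand_smul p hp, frobenius_def]
  rintro ⟨u, v⟩ huv hne
  rw [coeff_map, frobenius_def]
  by_contra hzero
  exact hne (Prod.ext_iff.mpr (eq_of_coeff_ne_zero_of_coeff_expand_ne_zero hp hq hg
    (mem_antidiagonal.mp huv) (left_ne_zero_of_mul hzero)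
    (fun h0 => right_ne_zero_of_mul hzero (by rw [h0, zero_pow hp]))))

end MvPolynomial

section FourLines

open MvPolynomial

variable {K : Type*} [Field K]

noncomputable def fourLines (a : K) : MvPolynomial (Fin 2) K :=
  X 0 * X 1 * (X 0 + X 1) * (X 0 + C a * X 1)

lemma isHomogeneous_fourLines (a : K) : (fourLines a).IsHomogeneous 4 :=
  (((isHomogeneous_X K 0).mul (isHomogeneous_X K 1)).mul
    ((isHomogeneous_X K 0).add (isHomogeneous_X K 1))).mul
    ((isHomogeneous_X K 0).add (isHomogeneous_C_mul_X a 1))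

lemma coeff_fourLines_pow (a : K) (n : ℕ) :
    coeff (expPair (2 * n) (2 * n)) (fourLines a ^ n) = (deuring K n).eval a := by
  have hsplit : fourLines a ^ n =
      monomial (expPair n n) 1 * ((X 0 + X 1) ^ n * (X 0 + C a * X 1) ^ n) := by
    simp only [fourLines, monomial_expPair, C_1, one_mul, mul_pow, mul_assoc]
  rw [hsplit, two_mul, ← expPair_add, coeff_monomial_mul, one_mul,
    coeff_X_add_X_pow_mul_X_add_C_mul_X_pow, deuring, Polynomial.eval_finsetSum]
  simp

lemma pow_mul_sub_one_div_two_of_odd {M : Type*} [Monoid M] (x : M) {p q : ℕ} (hp : Odd p)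
    (hq : Odd q) :
    x ^ ((p * q - 1) / 2) = x ^ ((p - 1) / 2) * (x ^ ((q - 1) / 2)) ^ p := by
  obtain ⟨m, rfl⟩ := hp
  obtain ⟨n, rfl⟩ := hq
  have : (2 * m + 1) * (2 * n + 1) - 1 = 2 * (m + (2 * m + 1) * n) := by
    rw [Nat.sub_eq_of_eq_add]; ring
  rw [this, ← pow_mul, ← pow_add]
  simp [Nat.mul_comm]

lemma coeff_fourLines_pow_ne_zero {p : ℕ} [ExpChar K p] (hp : Odd p) {a : K}
    (hH : (deuring K ((p - 1) / 2)).eval a ≠ 0) (e : ℕ) :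
    coeff (expPair (p ^ e - 1) (p ^ e - 1)) (fourLines a ^ ((p ^ e - 1) / 2)) ≠ 0 := by
  have hp2 : 2 * ((p - 1) / 2) = p - 1 := by obtain ⟨m, rfl⟩ := hp; omega
  have hbase := coeff_fourLines_pow a ((p - 1) / 2)
  rw [hp2] at hbase
  have hdeg := (isHomogeneous_fourLines a).pow ((p - 1) / 2)
  rw [show 4 * ((p - 1) / 2) = 2 * (p - 1) by omega] at hdeg
  induction e with
  | zero =>
    have : expPair 0 0 = 0 := by simp [expPair]
    rw [pow_zero, Nat.sub_self, Nat.zero_div, pow_zero, this, coeff_zero_one]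
    exact one_ne_zero
  | succ e ih =>
    have hpe : 0 < p ^ e := Nat.pos_of_ne_zero (pow_ne_zero e (expChar_ne_zero K p))
    rw [pow_succ', pow_mul_sub_one_div_two_of_odd _ hp hp.pow,
      coeff_mul_pow_expChar_expPair p hpe hdeg, hbase]
    exact mul_ne_zero hH (pow_ne_zero p ih)

end FourLines

section Threshold

open MvPolynomial Filter

variable {K : Type*} [Field K]

lemma lt_div_of_odd {w : ℝ} {q : ℕ} (hq : Odd q) (hw : 1 < q * (1 - 2 * w)) :
    w < (((q - 1) / 2 : ℕ) : ℝ) / q := by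
  obtain ⟨m, rfl⟩ := hq
  rw [show (2 * m + 1 - 1) / 2 = m by omega, lt_div_iff₀ (by positivity)]
  push_cast at hw ⊢
  linarith

lemma exists_pow_notMem_span_of_lt_half {p : ℕ} (hp : 1 < p) (hodd : Odd p)
    {f : MvPolynomial (Fin 2) K}
    (hcoeff : ∀ e, coeff (expPair (p ^ e - 1) (p ^ e - 1)) (f ^ ((p ^ e - 1) / 2)) ≠ 0)
    {w : ℝ} (hw : w < 1 / 2) :
    ∃ N e : ℕ, 0 < N ∧ 0 < e ∧ w < N / (p : ℝ) ^ e ∧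
      f ^ N ∉ Ideal.span {X 0 ^ p ^ e, X 1 ^ p ^ e} := by
  have hp' : (1 : ℝ) < p := by exact_mod_cast hp
  obtain ⟨e, hpe, he⟩ := (((tendsto_pow_atTop_atTop_of_one_lt hp').eventually_gt_atTop
    (1 / (1 - 2 * w))).and (eventually_ge_atTop 1)).exists
  have hq : 1 < p ^ e := Nat.one_lt_pow (by omega) hp
  obtain ⟨m, hm⟩ : Odd (p ^ e) := hodd.pow
  refine ⟨(p ^ e - 1) / 2, e, by omega, he, ?_,
    notMem_span_X_pow_of_coeff_ne_zero (by omega) (hcoeff e)⟩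
  rw [div_lt_iff₀ (by linarith)] at hpe
  exact_mod_cast lt_div_of_odd hodd.pow (by push_cast; linarith)

theorem fpt_eq_one_half {p : ℕ} (hp : 1 < p) (hodd : Odd p) {f : MvPolynomial (Fin 2) K}
    (hf : f.IsHomogeneous 4)
    (hcoeff : ∀ e, coeff (expPair (p ^ e - 1) (p ^ e - 1)) (f ^ ((p ^ e - 1) / 2)) ≠ 0) :
    fpt p f = 1 / 2 := by
  have happrox := fun w (hw : w < 1 / 2) => exists_pow_notMem_span_of_lt_half hp hodd hcoeff hw
  refine csSup_eq_of_forall_le_of_forall_lt_exists_gt ?_ ?_ fun w hw => ?_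
  · obtain ⟨N, e, hN, he, -, hnot⟩ := happrox 0 (by norm_num)
    exact ⟨_, N, e, hN, he, rfl, hnot⟩
  · rintro _ ⟨N, e, -, -, rfl, hnot⟩
    have hle := (hf.pow N).add_two_le_of_notMem_span hnot
    rw [div_le_div_iff₀ (by positivity) two_pos]
    exact_mod_cast (by omega : N * 2 ≤ 1 * p ^ e)
  · obtain ⟨N, e, hN, he, hw, hnot⟩ := happrox w hw
    exact ⟨_, ⟨N, e, hN, he, rfl, hnot⟩, hw⟩

end Threshold

open MvPolynomial Polynomial Finset

theorem fpt_deg_four_nonroot_general (p : ℕ) (hp : p.Prime) (hodd : Odd p)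
    (K : Type*) [Field K] [CharP K p]
    (a : K)
    (hH : (deuring K ((p - 1) / 2)).eval a ≠ 0) :
    fpt p (MvPolynomial.X 0 * MvPolynomial.X 1 * (MvPolynomial.X 0 + MvPolynomial.X 1) *
        (MvPolynomial.X 0 + MvPolynomial.C a * MvPolynomial.X 1) : MvPolynomial (Fin 2) K)
      = 1 / 2 := by
  have : ExpChar K p := .prime hp
  exact fpt_eq_one_half hp.one_lt hodd (isHomogeneous_fourLines a)
    (coeff_fourLines_pow_ne_zero hodd hH)

theorem fpt_deg_four_nonroot (p : ℕ) (hp : p.Prime) (hodd : Odd p)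
    (K : Type*) [Field K] [IsAlgClosed K] [CharP K p]
    (a : K) (ha0 : a ≠ 0) (ha1 : a ≠ 1)
    (hH : (deuring K ((p - 1) / 2)).eval a ≠ 0) :
    fpt p (MvPolynomial.X 0 * MvPolynomial.X 1 * (MvPolynomial.X 0 + MvPolynomial.X 1) *
        (MvPolynomial.X 0 + MvPolynomial.C a * MvPolynomial.X 1) : MvPolynomial (Fin 2) K)
      = 1 / 2 :=
  fpt_deg_four_nonroot_general p hp hodd K a hH
end

section
/- Fix an odd prime p and set n = (p−1)/2. If a ∈ 𝔽̄_p ∖ {0,1} is a root of H{n}, then each of 1/a, 1−a, 1/(1−a), a/(a−1), and (a−1)/a is also a root of H{n}. -/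
open Polynomial Finset

/-!
`H_n` is palindromic, `λ^n H_n(1/λ) = H_n(λ)`, so its roots are stable under `λ ↦ 1/λ`.
In characteristic `p = 2n + 1` it moreover satisfies `H_n(1 - λ) = (-1)^n H_n(λ)`: after
expanding `(1 - λ)^j`, the coefficient of `λ^i` is `(-1)^i ∑_j C(n,j)^2 C(j,i)
= (-1)^i C(n,i) C(p-1-i, n-i)`, and `C(p-1-i, k) ≡ (-1)^k C(i+k, k) mod p`.
The two involutions `λ ↦ 1/λ` and `λ ↦ 1 - λ` generate the whole orbit, and `H_n(0) = 1`
keeps `0` and `1` out of the set of roots.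
-/

theorem one_add_pow_eq_sum_range {R : Type*} [CommRing R] {j m : ℕ} (hj : j < m) (x : R) :
    (1 + x) ^ j = ∑ i ∈ range m, (j.choose i : R) * x ^ i := by
  nontriviality R
  have hdeg : ((1 + X : R[X]) ^ j).natDegree < m := by
    rwa [add_comm, ← C_1, natDegree_pow_X_add_C]
  simpa [coeff_one_add_X_pow] using eval_eq_sum_range' hdeg x

theorem eval_deuring {R : Type*} [CommRing R] (n : ℕ) (a : R) :
    (deuring R n).eval a = ∑ i ∈ range (n + 1), (n.choose i : R) ^ 2 * a ^ i := by
  simp [deuring, eval_finsetSum]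

theorem eval_deuring_zero {R : Type*} [CommRing R] (n : ℕ) : (deuring R n).eval 0 = 1 := by
  rw [eval_deuring, sum_range_succ', sum_eq_zero fun i _ => by simp]
  simp

section Field

variable {K : Type*} [Field K] {n : ℕ}

theorem pow_mul_eval_deuring_inv {a : K} (ha : a ≠ 0) :
    a ^ n * (deuring K n).eval a⁻¹ = (deuring K n).eval a := by
  rw [eval_deuring, eval_deuring, mul_sum, ← sum_range_reflect]
  refine sum_congr rfl fun i hi => ?_
  have hin : i ≤ n := Nat.lt_succ_iff.mp (mem_range.mp hi)
  rw [Nat.add_sub_cancel, Nat.choose_symm hin, inv_pow, ← pow_sub_mul_pow a hin]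
  field_simp

theorem eval_deuring_inv_eq_zero {a : K} (h : (deuring K n).eval a = 0) :
    (deuring K n).eval a⁻¹ = 0 := by
  have ha : a ≠ 0 := by rintro rfl; simp [eval_deuring_zero] at h
  simpa [← pow_mul_eval_deuring_inv (n := n) ha, ha] using h

end Field

theorem Nat.sum_range_choose_sq_mul_choose {n i : ℕ} (hi : i ≤ n) :
    ∑ j ∈ range (n + 1), n.choose j ^ 2 * j.choose i
      = n.choose i * (2 * n - i).choose (n - i) := by
  have hvanish : ∑ j ∈ range i, n.choose j ^ 2 * j.choose i = 0 :=
    sum_eq_zero fun j hj => by rw [Nat.choose_eq_zero_of_lt (mem_range.mp hj), mul_zero]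
  rw [← sum_range_add_sum_Ico _ (by omega : i ≤ n + 1), hvanish, zero_add,
    sum_Ico_eq_sum_range, show n + 1 - i = n - i + 1 by omega]
  calc ∑ k ∈ range (n - i + 1), n.choose (i + k) ^ 2 * (i + k).choose i
      = ∑ k ∈ range (n - i + 1), n.choose i * ((n - i).choose k * n.choose (n - i - k)) := by
        refine sum_congr rfl fun k hk => ?_
        have hik : i + k ≤ n := by have := mem_range.mp hk; omega
        rw [sq, mul_assoc, Nat.choose_mul (Nat.le_add_right i k), Nat.add_sub_cancel_left,
          ← Nat.choose_symm hik, show n - (i + k) = n - i - k by omega]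
        ring
    _ = n.choose i * (2 * n - i).choose (n - i) := by
        rw [← mul_sum, show 2 * n - i = (n - i) + n by omega, Nat.add_choose_eq,
          Nat.sum_antidiagonal_eq_sum_range_succ_mk]

section CharP

variable {K : Type*} [Field K] (p : ℕ) [Fact p.Prime] [CharP K p]

theorem cast_choose_sub_one_sub {i k : ℕ} (hi : i < p) (hk : k < p) :
    ((p - 1 - i).choose k : K) = (-1) ^ k * ((i + k).choose k : K) := by
  have hfact : (k.factorial : K) ≠ 0 := by
    rw [Ne, CharP.cast_eq_zero_iff K p, (Fact.out : p.Prime).dvd_factorial]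
    omega
  have hneg : ((p - 1 - i : ℕ) : K) = -((i + 1 : ℕ) : K) := by
    refine eq_neg_of_add_eq_zero_left ?_
    rw [← Nat.cast_add, show p - 1 - i + (i + 1) = p by omega, CharP.cast_eq_zero]
  apply mul_left_cancel₀ hfact
  calc (k.factorial : K) * (p - 1 - i).choose k
      = (descPochhammer K k).eval ((p - 1 - i : ℕ) : K) := by
        rw [descPochhammer_eval_eq_descFactorial, Nat.descFactorial_eq_factorial_mul_choose,
          Nat.cast_mul]
    _ = (-1) ^ k * (ascPochhammer K k).eval ((i + 1 : ℕ) : K) := by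
        rw [hneg, ← neg_neg ((i + 1 : ℕ) : K), ascPochhammer_eval_neg_eq_descPochhammer,
          neg_neg, ← mul_assoc, ← mul_pow, neg_one_mul, neg_neg, one_pow, one_mul]
    _ = (k.factorial : K) * ((-1) ^ k * ((i + k).choose k : K)) := by
        rw [← Nat.cast_ascFactorial, Nat.ascFactorial_eq_factorial_mul_choose, Nat.cast_mul]
        ring

theorem sum_cast_choose_sq_mul_choose {n i : ℕ} (hp : p = 2 * n + 1) (hi : i ≤ n) :
    ∑ j ∈ range (n + 1), (n.choose j : K) ^ 2 * (j.choose i : K)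
      = (-1) ^ (n - i) * (n.choose i : K) ^ 2 := by
  have hnat := congrArg (Nat.cast : ℕ → K) (Nat.sum_range_choose_sq_mul_choose hi)
  push_cast at hnat
  rw [hnat, show 2 * n - i = p - 1 - i by omega, cast_choose_sub_one_sub p (by omega) (by omega),
    show i + (n - i) = n by omega, Nat.choose_symm hi]
  ring

theorem eval_deuring_one_sub {n : ℕ} (hp : p = 2 * n + 1) (a : K) :
    (deuring K n).eval (1 - a) = (-1) ^ n * (deuring K n).eval a := by
  calc (deuring K n).eval (1 - a)
      = ∑ j ∈ range (n + 1), (n.choose j : K) ^ 2 *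
          ∑ i ∈ range (n + 1), (j.choose i : K) * (-a) ^ i := by
        rw [eval_deuring]
        refine sum_congr rfl fun j hj => ?_
        rw [← one_add_pow_eq_sum_range (mem_range.mp hj), sub_eq_add_neg]
    _ = ∑ i ∈ range (n + 1),
          (∑ j ∈ range (n + 1), (n.choose j : K) ^ 2 * (j.choose i : K)) * (-a) ^ i := by
        simp only [mul_sum, sum_mul, mul_assoc]
        exact sum_comm
    _ = ∑ i ∈ range (n + 1), (-1) ^ n * ((n.choose i : K) ^ 2 * a ^ i) := by
        refine sum_congr rfl fun i hi => ?_
        have hin : i ≤ n := Nat.lt_succ_iff.mp (mem_range.mp hi)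
        rw [sum_cast_choose_sq_mul_choose p hp hin, neg_pow, ← pow_sub_mul_pow (-1 : K) hin]
        ring
    _ = (-1) ^ n * (deuring K n).eval a := by rw [eval_deuring, mul_sum]

end CharP

theorem deuring_roots_orbit_general (p : ℕ) [Fact p.Prime] (hodd : Odd p)
    (a : AlgebraicClosure (ZMod p))
    (hroot : (deuring (AlgebraicClosure (ZMod p)) ((p - 1) / 2)).eval a = 0) :
    (deuring (AlgebraicClosure (ZMod p)) ((p - 1) / 2)).eval a⁻¹ = 0 ∧
    (deuring (AlgebraicClosure (ZMod p)) ((p - 1) / 2)).eval (1 - a) = 0 ∧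
    (deuring (AlgebraicClosure (ZMod p)) ((p - 1) / 2)).eval (1 - a)⁻¹ = 0 ∧
    (deuring (AlgebraicClosure (ZMod p)) ((p - 1) / 2)).eval (a / (a - 1)) = 0 ∧
    (deuring (AlgebraicClosure (ZMod p)) ((p - 1) / 2)).eval ((a - 1) / a) = 0 := by
  set H := deuring (AlgebraicClosure (ZMod p)) ((p - 1) / 2)
  have hp : p = 2 * ((p - 1) / 2) + 1 := by obtain ⟨m, rfl⟩ := hodd; omega
  have one_sub_root {b} (hb : H.eval b = 0) : H.eval (1 - b) = 0 := by
    rw [eval_deuring_one_sub p hp, hb, mul_zero]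
  have hinv := eval_deuring_inv_eq_zero hroot
  have hsub := one_sub_root hroot
  have hsubinv := eval_deuring_inv_eq_zero hsub
  have ha0 : a ≠ 0 := by rintro rfl; simp [H, eval_deuring_zero] at hroot
  have ha1 : a - 1 ≠ 0 := by
    rw [sub_ne_zero]; rintro rfl; simp [H, eval_deuring_zero] at hsub
  have ha1' : 1 - a ≠ 0 := by rwa [← neg_sub, neg_ne_zero]
  have hdiv : a / (a - 1) = 1 - (1 - a)⁻¹ := by field_simp; ring
  have hdiv' : (a - 1) / a = 1 - a⁻¹ := by field_simp
  exact ⟨hinv, hsub, hsubinv, hdiv ▸ one_sub_root hsubinv, hdiv' ▸ one_sub_root hinv⟩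

theorem deuring_roots_orbit (p : ℕ) [Fact p.Prime] (hodd : Odd p)
    (a : AlgebraicClosure (ZMod p)) (ha0 : a ≠ 0) (ha1 : a ≠ 1)
    (hroot : (deuring (AlgebraicClosure (ZMod p)) ((p - 1) / 2)).eval a = 0) :
    (deuring (AlgebraicClosure (ZMod p)) ((p - 1) / 2)).eval a⁻¹ = 0 ∧
    (deuring (AlgebraicClosure (ZMod p)) ((p - 1) / 2)).eval (1 - a) = 0 ∧
    (deuring (AlgebraicClosure (ZMod p)) ((p - 1) / 2)).eval (1 - a)⁻¹ = 0 ∧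
    (deuring (AlgebraicClosure (ZMod p)) ((p - 1) / 2)).eval (a / (a - 1)) = 0 ∧
    (deuring (AlgebraicClosure (ZMod p)) ((p - 1) / 2)).eval ((a - 1) / a) = 0 :=
  deuring_roots_orbit_general p hodd a hroot
end
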